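/- arXiv:2201.10533 — 2 statements merged into one kernel-verified Lean document; each statement's English description precedes it below -/
import Mathlib

section
/- With the edge sets E(u_j) (for j ∈ {0, k+1, k+2, …, k+m}) and E(v_ℓ) (for ℓ ∈ {0, 1, …, k}) defined as in the context, if E(u_j) ∩ E(v_ℓ) ≠ ∅ then j = ℓ = 0. -/
/-!
# Tanglegrams

A rooted binary tree is modelled by the inductive type `BTree`, whose leaves carry
natural-number labels.  Vertices of a tree are identified with the sets of labels of
their leaf descendants (their *clades*): since all leaf labels of the trees occurring
in a tanglegram are distinct, this identification is injective.

A tanglegram of size `n` consists of two rooted binary trees whose leaves are labelled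
bijectively by `{0, …, n-1}` together with a permutation `φ` matching leaf `t i` of
the first tree with leaf `s (φ i)` of the second tree.

A layout is recorded by the pair of lists of leaf labels of the two trees, read from
top to bottom; the defining property is that the leaf set of every vertex occupies a
consecutive block.
-/

/-- A rooted binary tree with leaves labelled by natural numbers. -/
inductive BTree : Type
  | leaf : ℕ → BTree
  | node : BTree → BTree → BTree

namespace BTree

/-- The list of leaf labels of a tree, from left to right. -/
def leafList : BTree → List ℕ
  | .leaf i => [i]
  | .node l r => l.leafList ++ r.leafList

/-- The set of leaf labels of a tree. -/
def leaves (t : BTree) : Finset ℕ := t.leafList.toFinset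

/-- `t.Clade s` : `s` is the set of labels of the leaf descendants of some vertex
of `t`. -/
def Clade : BTree → Finset ℕ → Prop
  | .leaf i, s => s = {i}
  | .node l r, s => s = (BTree.node l r).leaves ∨ l.Clade s ∨ r.Clade s

/-- `t.InternalClade s` : `s` is the set of labels of the leaf descendants of some
*internal* vertex of `t`. -/
def InternalClade : BTree → Finset ℕ → Prop
  | .leaf _, _ => False
  | .node l r, s => s = (BTree.node l r).leaves ∨ l.InternalClade s ∨ r.InternalClade s

/-- `t.NodeClades c c₁ c₂` : some internal vertex of `t` has leaf-label set `c`, and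
its two children have leaf-label sets `c₁` and `c₂` (in left-right order). -/
def NodeClades : BTree → Finset ℕ → Finset ℕ → Finset ℕ → Prop
  | .leaf _, _, _, _ => False
  | .node l r, c, c₁, c₂ =>
      (c = (BTree.node l r).leaves ∧ c₁ = l.leaves ∧ c₂ = r.leaves) ∨
      l.NodeClades c c₁ c₂ ∨ r.NodeClades c c₁ c₂

end BTree

/-- A tanglegram of size `n` : two rooted binary trees `T` and `S` whose leaves are
labelled bijectively by `{0, …, n-1}`, together with a permutation `φ` matching the
leaf of `T` labelled `i` with the leaf of `S` labelled `φ i`.  (The permutation is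
normalised to be the identity off `{0, …, n-1}`.) -/
structure Tanglegram (n : ℕ) where
  T : BTree
  S : BTree
  φ : Equiv.Perm ℕ
  hT : T.leafList.Nodup ∧ ∀ i, i ∈ T.leafList ↔ i < n
  hS : S.leafList.Nodup ∧ ∀ i, i ∈ S.leafList ↔ i < n
  hφ : ∀ i, n ≤ i → φ i = i

/-- The elements of the finite set `s` occur as a consecutive block of the list `X`. -/
def ConsecIn (X : List ℕ) (s : Finset ℕ) : Prop :=
  ∃ l m r : List ℕ, X = l ++ m ++ r ∧ ∀ a, a ∈ m ↔ a ∈ s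

/-- `(X, Y)` is a layout of the tanglegram `G` : `X` is an ordering of the leaf labels
of `T`, `Y` one of the leaf labels of `S`, and the leaf set of every vertex of either
tree forms a consecutive block. -/
def IsLayout {n : ℕ} (G : Tanglegram n) (X Y : List ℕ) : Prop :=
  X.Perm G.T.leafList ∧ Y.Perm G.S.leafList ∧
    (∀ s, G.T.Clade s → ConsecIn X s) ∧ (∀ s, G.S.Clade s → ConsecIn Y s)

/-- The between-tree edges `e i` and `e j` cross in the layout `(X, Y)` :
`t i` precedes `t j` in `X` while `s (φ j)` precedes `s (φ i)` in `Y`. -/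
def Crossing {n : ℕ} (G : Tanglegram n) (X Y : List ℕ) (i j : ℕ) : Prop :=
  i < n ∧ j < n ∧ X.idxOf i < X.idxOf j ∧ Y.idxOf (G.φ j) < Y.idxOf (G.φ i)

/-- The number of crossings of the layout `(X, Y)` (each crossing pair of between-tree
edges is counted once, ordered by position in `X`). -/
def crossCount {n : ℕ} (G : Tanglegram n) (X Y : List ℕ) : ℕ :=
  ((Finset.range n ×ˢ Finset.range n).filter fun p =>
    X.idxOf p.1 < X.idxOf p.2 ∧ Y.idxOf (G.φ p.2) < Y.idxOf (G.φ p.1)).card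

/-- A planar layout is a layout with no crossings. -/
def IsPlanarLayout {n : ℕ} (G : Tanglegram n) (X Y : List ℕ) : Prop :=
  IsLayout G X Y ∧ ∀ i j, ¬ Crossing G X Y i j

/-- A tanglegram is planar if it admits a planar layout. -/
def IsPlanarTanglegram {n : ℕ} (G : Tanglegram n) : Prop :=
  ∃ X Y, IsPlanarLayout G X Y

/-- The crossing number: the minimum number of crossings over all layouts. -/
noncomputable def crt {n : ℕ} (G : Tanglegram n) : ℕ :=
  sInf {c | ∃ X Y, IsLayout G X Y ∧ crossCount G X Y = c}

/-- `(cu, cv)` is a leaf-matched pair of `G` (a pair of internal vertices, recorded by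
their leaf-label sets, such that `φ` matches the leaves below the first exactly with
the leaves below the second). -/
def LeafMatchedPair {n : ℕ} (G : Tanglegram n) (cu cv : Finset ℕ) : Prop :=
  G.T.InternalClade cu ∧ G.S.InternalClade cv ∧ cv = cu.image G.φ

/-- A tanglegram (of size at least 2) is irreducible if its only leaf-matched pair is
the pair of roots. -/
def IrreducibleTanglegram {n : ℕ} (G : Tanglegram n) : Prop :=
  2 ≤ n ∧ ∀ cu cv, LeafMatchedPair G cu cv →
    cu = Finset.range n ∧ cv = Finset.range n

/-- `X'` is obtained from `X` by reversing the consecutive block consisting of the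
elements of `s` : the effect on a layout of a flip at the vertex with leaf set `s`. -/
def FlipBlock (s : Finset ℕ) (X X' : List ℕ) : Prop :=
  ∃ l m r : List ℕ, X = l ++ m ++ r ∧ (∀ a, a ∈ m ↔ a ∈ s) ∧ X' = l ++ m.reverse ++ r

/-- `X'` is obtained from `X` by interchanging the adjacent blocks consisting of the
elements of `s₁` and of `s₂` (occurring in this order), keeping the relative order of
the elements within each block. -/
def SwitchBlock (s₁ s₂ : Finset ℕ) (X X' : List ℕ) : Prop :=
  ∃ l m₁ m₂ r : List ℕ, X = l ++ m₁ ++ m₂ ++ r ∧ (∀ a, a ∈ m₁ ↔ a ∈ s₁) ∧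
    (∀ a, a ∈ m₂ ↔ a ∈ s₂) ∧ X' = l ++ m₂ ++ m₁ ++ r

/-- The effect of a subtree switch at an internal vertex whose children have leaf sets
`c₁` and `c₂` (in either order in the layout). -/
def SwitchAt (c₁ c₂ : Finset ℕ) (X X' : List ℕ) : Prop :=
  SwitchBlock c₁ c₂ X X' ∨ SwitchBlock c₂ c₁ X X'

/-- One paired flip at a leaf-matched pair of `G`, acting on layouts. -/
def PairedFlipStep {n : ℕ} (G : Tanglegram n) (p q : List ℕ × List ℕ) : Prop :=
  ∃ cu cv, LeafMatchedPair G cu cv ∧ FlipBlock cu p.1 q.1 ∧ FlipBlock cv p.2 q.2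

/-! ## Induced subtanglegrams

For `I ⊆ {0, …, n-1}`, the induced subtanglegram `(T_I, S_{φ(I)}, φ|_I)` is obtained
by keeping only the leaves indexed by `I` (resp. `φ(I)`) and suppressing vertices with
a single remaining child.  Its vertices are identified with the vertices of `T`, `S`
that survive, and the clades of `T_I` are exactly the nonempty sets `c ∩ I` for `c` a
clade of `T`. -/

/-- `(A, B)` is a layout of the subtanglegram of `G` induced by `I` : `A` orders the
leaf labels in `I`, `B` those in `φ(I)`, and every clade of the induced subtrees is
consecutive. -/
def IsSubLayout {n : ℕ} (G : Tanglegram n) (I : Finset ℕ) (A B : List ℕ) : Prop :=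
  A.Nodup ∧ (∀ a, a ∈ A ↔ a ∈ I) ∧ B.Nodup ∧ (∀ b, b ∈ B ↔ b ∈ I.image G.φ) ∧
    (∀ c, G.T.Clade c → ConsecIn A (c ∩ I)) ∧
    (∀ c, G.S.Clade c → ConsecIn B (c ∩ I.image G.φ))

/-- A planar layout of the subtanglegram induced by `I` : a layout in which no two of
the between-tree edges indexed by `I` cross. -/
def IsPlanarSubLayout {n : ℕ} (G : Tanglegram n) (I : Finset ℕ) (A B : List ℕ) : Prop :=
  IsSubLayout G I A B ∧ ∀ i ∈ I, ∀ j ∈ I,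
    ¬ (A.idxOf i < A.idxOf j ∧ B.idxOf (G.φ j) < B.idxOf (G.φ i))

/-- The subtanglegram of `G` induced by `I` is planar. -/
def SubPlanar {n : ℕ} (G : Tanglegram n) (I : Finset ℕ) : Prop :=
  ∃ A B, IsPlanarSubLayout G I A B

/-- The layout `(X, Y)` of `G` restricts (deleting the leaves not indexed by `I`,
resp. `φ(I)`) to a planar layout of the subtanglegram induced by `I`. -/
def RestrictsToPlanarSub {n : ℕ} (G : Tanglegram n) (I : Finset ℕ) (X Y : List ℕ) :
    Prop :=
  IsPlanarSubLayout G I (X.filter fun a => decide (a ∈ I))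
    (Y.filter fun b => decide (b ∈ I.image G.φ))

/-- The vertex of the tree `t` with leaf set `c` is an internal vertex of the subtree
induced by `I` : both of its children have leaf descendants indexed by `I` (so it is
neither suppressed nor outside the minimal subtree). -/
def SurvivesInternal (t : BTree) (I : Finset ℕ) (c : Finset ℕ) : Prop :=
  ∃ c₁ c₂, t.NodeClades c c₁ c₂ ∧ (c₁ ∩ I).Nonempty ∧ (c₂ ∩ I).Nonempty

/-- `(cu, cv)` is a member of `L(I)`, the set of leaf-matched pairs of the
subtanglegram induced by `I` : the pair is recorded by the full leaf sets in `T`, `S`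
of the two vertices, which are internal vertices of the induced subtrees whose leaf
sets within the subtanglegram are matched by `φ`. -/
def MemLI {n : ℕ} (G : Tanglegram n) (I : Finset ℕ) (cu cv : Finset ℕ) : Prop :=
  SurvivesInternal G.T I cu ∧ SurvivesInternal G.S (I.image G.φ) cv ∧
    (cu ∩ I).image G.φ = cv ∩ I.image G.φ

/-! ## Single edge insertion: `I = [n] \ {i}`

`u₀` denotes the parent of the leaf `t i` in `T` and `v₀` the parent of the leaf
`s (φ i)` in `S`. -/

/-- `cu₀` is the leaf set of `u₀`, the parent of the leaf labelled `i` in `T`. -/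
def IsParentCladeT {n : ℕ} (G : Tanglegram n) (i : ℕ) (cu₀ : Finset ℕ) : Prop :=
  ∃ c, G.T.NodeClades cu₀ {i} c ∨ G.T.NodeClades cu₀ c {i}

/-- `cv₀` is the leaf set of `v₀`, the parent of the leaf labelled `φ i` in `S`. -/
def IsParentCladeS {n : ℕ} (G : Tanglegram n) (i : ℕ) (cv₀ : Finset ℕ) : Prop :=
  ∃ d, G.S.NodeClades cv₀ {G.φ i} d ∨ G.S.NodeClades cv₀ d {G.φ i}

/-- A subtree switch at `u₀`, the parent of the leaf labelled `i` in `T`. -/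
def SwitchAtParentT {n : ℕ} (G : Tanglegram n) (i : ℕ) (X X' : List ℕ) : Prop :=
  ∃ c, (G.T.NodeClades ({i} ∪ c) {i} c ∨ G.T.NodeClades ({i} ∪ c) c {i}) ∧
    SwitchAt {i} c X X'

/-- A subtree switch at `v₀`, the parent of the leaf labelled `φ i` in `S`. -/
def SwitchAtParentS {n : ℕ} (G : Tanglegram n) (i : ℕ) (Y Y' : List ℕ) : Prop :=
  ∃ d, (G.S.NodeClades ({G.φ i} ∪ d) {G.φ i} d ∨ G.S.NodeClades ({G.φ i} ∪ d) d {G.φ i}) ∧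
    SwitchAt {G.φ i} d Y Y'

/-- `(cu, cv) ∈ L(I)_T` for `I = [n] \ {i}` : a leaf-matched pair of the induced
subtanglegram such that `u` is an ancestor of `t i` and `v` is not an ancestor of
`s (φ i)`. -/
def MemLIT {n : ℕ} (G : Tanglegram n) (i : ℕ) (cu cv : Finset ℕ) : Prop :=
  MemLI G ((Finset.range n).erase i) cu cv ∧ i ∈ cu ∧ G.φ i ∉ cv

/-- `(cu, cv) ∈ L(I)_S` for `I = [n] \ {i}` : a leaf-matched pair of the induced
subtanglegram such that `u` is not an ancestor of `t i` and `v` is an ancestor of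
`s (φ i)`. -/
def MemLIS {n : ℕ} (G : Tanglegram n) (i : ℕ) (cu cv : Finset ℕ) : Prop :=
  MemLI G ((Finset.range n).erase i) cu cv ∧ i ∉ cu ∧ G.φ i ∈ cv

namespace BTree

lemma leafList_ne_nil : ∀ t : BTree, t.leafList ≠ []
  | .leaf i => by simp [leafList]
  | .node l r => by
      intro h
      exact leafList_ne_nil l (List.append_eq_nil_iff.mp h).1

lemma leaves_nonempty (t : BTree) : t.leaves.Nonempty := by
  have h := leafList_ne_nil t
  cases hl : t.leafList with
  | nil => exact absurd hl h
  | cons a l => exact ⟨a, by simp [leaves, hl]⟩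

lemma leaves_node (l r : BTree) : (node l r).leaves = l.leaves ∪ r.leaves := by
  simp [leaves, leafList]

lemma clade_leaves : ∀ t : BTree, t.Clade t.leaves
  | .leaf i => by simp [Clade, leaves, leafList]
  | .node l r => Or.inl rfl

lemma clade_subset : ∀ (t : BTree) {c : Finset ℕ}, t.Clade c → c ⊆ t.leaves
  | .leaf i, c, h => by
      rw [show Clade (.leaf i) c = (c = {i}) from rfl] at h
      subst h; simp [leaves, leafList]
  | .node l r, c, h => by
      rcases h with h | h | h
      · exact h ▸ subset_rfl
      · exact (clade_subset l h).trans (by rw [leaves_node]; exact Finset.subset_union_left)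
      · exact (clade_subset r h).trans (by rw [leaves_node]; exact Finset.subset_union_right)

lemma clade_nonempty : ∀ (t : BTree) {c : Finset ℕ}, t.Clade c → c.Nonempty
  | .leaf i, c, h => by
      rw [show Clade (.leaf i) c = (c = {i}) from rfl] at h
      subst h; exact ⟨i, Finset.mem_singleton_self i⟩
  | .node l r, c, h => by
      rcases h with h | h | h
      · exact h ▸ leaves_nonempty _
      · exact clade_nonempty l h
      · exact clade_nonempty r h

lemma nodeClades_spec : ∀ (t : BTree) {c a b : Finset ℕ}, t.NodeClades c a b →
    t.Clade c ∧ t.Clade a ∧ t.Clade b ∧ c = a ∪ b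
  | .leaf _, _, _, _, h => h.elim
  | .node l r, c, a, b, h => by
      rcases h with ⟨hc, ha, hb⟩ | h | h
      · subst hc; subst ha; subst hb
        exact ⟨Or.inl rfl, Or.inr (Or.inl (clade_leaves l)),
          Or.inr (Or.inr (clade_leaves r)), leaves_node l r⟩
      · obtain ⟨h1, h2, h3, h4⟩ := nodeClades_spec l h
        exact ⟨Or.inr (Or.inl h1), Or.inr (Or.inl h2), Or.inr (Or.inl h3), h4⟩
      · obtain ⟨h1, h2, h3, h4⟩ := nodeClades_spec r h
        exact ⟨Or.inr (Or.inr h1), Or.inr (Or.inr h2), Or.inr (Or.inr h3), h4⟩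

lemma nodup_parts {l r : BTree} (h : (node l r).leafList.Nodup) :
    l.leafList.Nodup ∧ r.leafList.Nodup ∧ Disjoint l.leaves r.leaves := by
  rw [show (node l r).leafList = l.leafList ++ r.leafList from rfl,
    List.nodup_append] at h
  exact ⟨h.1, h.2.1, List.disjoint_toFinset_iff_disjoint.mpr
    (fun a ha hb => h.2.2 a ha a hb rfl)⟩

lemma nodeClades_disjoint : ∀ (t : BTree) {c a b : Finset ℕ}, t.leafList.Nodup →
    t.NodeClades c a b → Disjoint a b
  | .leaf _, _, _, _, _, h => h.elim
  | .node l r, c, a, b, hnd, h => by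
      obtain ⟨hl, hr, hdisj⟩ := nodup_parts hnd
      rcases h with ⟨hc, ha, hb⟩ | h | h
      · subst ha; subst hb; exact hdisj
      · exact nodeClades_disjoint l hl h
      · exact nodeClades_disjoint r hr h

lemma laminar : ∀ (t : BTree) {c₁ c₂ : Finset ℕ}, t.leafList.Nodup →
    t.Clade c₁ → t.Clade c₂ → (c₁ ∩ c₂).Nonempty → c₁ ⊆ c₂ ∨ c₂ ⊆ c₁
  | .leaf i, c₁, c₂, _, h1, h2, _ => by
      rw [show Clade (.leaf i) c₁ = (c₁ = {i}) from rfl] at h1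
      rw [show Clade (.leaf i) c₂ = (c₂ = {i}) from rfl] at h2
      subst h1; subst h2; exact Or.inl subset_rfl
  | .node l r, c₁, c₂, hnd, h1, h2, hne => by
      obtain ⟨hndl, hndr, hdisj⟩ := nodup_parts hnd
      rcases h1 with h1 | h1 | h1
      · exact Or.inr (h1 ▸ clade_subset _ h2)
      · rcases h2 with h2 | h2 | h2
        · exact Or.inl (h2 ▸ clade_subset _ (Or.inr (Or.inl h1)))
        · exact laminar l hndl h1 h2 hne
        · obtain ⟨x, hx⟩ := hne
          rw [Finset.mem_inter] at hx
          exact absurd (clade_subset r h2 hx.2)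
            (Finset.disjoint_left.mp hdisj (clade_subset l h1 hx.1))
      · rcases h2 with h2 | h2 | h2
        · exact Or.inl (h2 ▸ clade_subset _ (Or.inr (Or.inr h1)))
        · obtain ⟨x, hx⟩ := hne
          rw [Finset.mem_inter] at hx
          exact absurd (clade_subset r h1 hx.1)
            (Finset.disjoint_left.mp hdisj (clade_subset l h2 hx.2))
        · exact laminar r hndr h1 h2 hne

end BTree

/-- Index `L(I)_S = {(u_j, v_j)}_{j=1}^{k}` with
`v_1 <_S … <_S v_k` and `L(I)_T = {(u_j, v_j)}_{j=k+1}^{k+m}` with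
`u_{k+1} <_T … <_T u_{k+m}` (ancestry being strict inclusion of clades), and assume
`u₀` is not an ancestor of `u_Smax = u_k`-side maximum and `v₀` is not an ancestor of
`v_Tmax`.  Setting `vS 0 := leaf v₀` and `uT k := leaf u₀`, the edge sets are
`E(v_ℓ) = {e_a : φ a ∈ vS ℓ \ vS (ℓ-1)}` for `1 ≤ ℓ ≤ k`,
`E(u_j) = {e_a : a ∈ uT j \ uT (j-1)}` for `k+1 ≤ j ≤ k+m`,
`E(u₀) = {e_a : a ∈ leaf u₀ \ {t i}}` and `E(v₀) = {e_a : φ a ∈ leaf v₀ \ {s (φ i)}}`.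
Then `E(u_j) ∩ E(v_ℓ) ≠ ∅` can only happen when `j = ℓ = 0`. -/
theorem edge_sets_disjoint {n : ℕ} (G : Tanglegram n) (i : ℕ) (hi : i < n)
    (hpl : SubPlanar G ((Finset.range n).erase i))
    (cu₀ cv₀ : Finset ℕ)
    (hu₀ : IsParentCladeT G i cu₀) (hv₀ : IsParentCladeS G i cv₀)
    (k m : ℕ) (uS vS uT vT : ℕ → Finset ℕ)
    -- enumeration of L(I)_S, increasing in the second coordinate
    (hLS : ∀ j, 1 ≤ j → j ≤ k → MemLIS G i (uS j) (vS j))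
    (hLSord : ∀ j j', 1 ≤ j → j < j' → j' ≤ k → vS j ⊂ vS j')
    (hLSall : ∀ a b, MemLIS G i a b → ∃ j, 1 ≤ j ∧ j ≤ k ∧ a = uS j ∧ b = vS j)
    (hvS0 : vS 0 = cv₀)
    -- enumeration of L(I)_T, increasing in the first coordinate
    (hLT : ∀ j, k + 1 ≤ j → j ≤ k + m → MemLIT G i (uT j) (vT j))
    (hLTord : ∀ j j', k + 1 ≤ j → j < j' → j' ≤ k + m → uT j ⊂ uT j')
    (hLTall : ∀ a b, MemLIT G i a b → ∃ j, k + 1 ≤ j ∧ j ≤ k + m ∧ a = uT j ∧ b = vT j)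
    (huTk : uT k = cu₀)
    -- `u₀` is not an ancestor of `u_Smax`, `v₀` is not an ancestor of `v_Tmax`
    (hS : 1 ≤ k → ¬ uS k ⊂ cu₀)
    (hT : 1 ≤ m → ¬ vT (k + m) ⊂ cv₀) :
    -- E(u_j) ∩ E(v_ℓ) = ∅ for k+1 ≤ j ≤ k+m, 1 ≤ ℓ ≤ k
    (∀ j ℓ, k + 1 ≤ j → j ≤ k + m → 1 ≤ ℓ → ℓ ≤ k →
      ∀ a, a < n → a ∈ uT j \ uT (j-1) → G.φ a ∉ vS ℓ \ vS (ℓ-1)) ∧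
    -- E(u_j) ∩ E(v₀) = ∅ for k+1 ≤ j ≤ k+m
    (∀ j, k + 1 ≤ j → j ≤ k + m →
      ∀ a, a < n → a ∈ uT j \ uT (j-1) → G.φ a ∉ cv₀ \ {G.φ i}) ∧
    -- E(u₀) ∩ E(v_ℓ) = ∅ for 1 ≤ ℓ ≤ k
    (∀ ℓ, 1 ≤ ℓ → ℓ ≤ k →
      ∀ a, a < n → a ∈ cu₀ \ {i} → G.φ a ∉ vS ℓ \ vS (ℓ-1)) := by
  clear hpl hLSall hLTall
  set I : Finset ℕ := (Finset.range n).erase i with hI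
  have hφinj : Function.Injective G.φ := G.φ.injective
  have hltn : ∀ x, x < n → G.φ x < n := by
    intro x hx
    by_contra h
    push_neg at h
    have h2 := G.hφ (G.φ x) h
    have := hφinj h2
    omega
  -- clades are contained in `range n`
  have hTsub : ∀ c, G.T.Clade c → ∀ x ∈ c, x < n := fun c hc x hx =>
    (G.hT.2 x).1 (List.mem_toFinset.mp (BTree.clade_subset _ hc hx))
  have hSsub : ∀ c, G.S.Clade c → ∀ x ∈ c, x < n := fun c hc x hx =>
    (G.hS.2 x).1 (List.mem_toFinset.mp (BTree.clade_subset _ hc hx))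
  have hrange_img : (Finset.range n).image G.φ = Finset.range n := by
    ext y
    simp only [Finset.mem_image, Finset.mem_range]
    constructor
    · rintro ⟨x, hx, rfl⟩; exact hltn x hx
    · intro hy
      refine ⟨G.φ.symm y, ?_, G.φ.apply_symm_apply y⟩
      by_contra h
      push_neg at h
      have := G.hφ _ h
      rw [G.φ.apply_symm_apply] at this
      omega
  have hIimg : I.image G.φ = (Finset.range n).erase (G.φ i) := by
    rw [hI, Finset.image_erase hφinj, hrange_img]
  -- facts about the pairs in L(I)_S
  have hSfacts : ∀ ℓ, 1 ≤ ℓ → ℓ ≤ k →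
      G.T.Clade (uS ℓ) ∧ G.S.Clade (vS ℓ) ∧ i ∉ uS ℓ ∧ G.φ i ∈ vS ℓ ∧
        (uS ℓ).image G.φ = (vS ℓ).erase (G.φ i) := by
    intro ℓ h1 h2
    obtain ⟨⟨hsT, hsS, himg⟩, hiu, hφv⟩ := hLS ℓ h1 h2
    obtain ⟨c₁, c₂, hnc, _, _⟩ := hsT
    obtain ⟨d₁, d₂, hnd, _, _⟩ := hsS
    have hcu : G.T.Clade (uS ℓ) := (BTree.nodeClades_spec _ hnc).1
    have hcv : G.S.Clade (vS ℓ) := (BTree.nodeClades_spec _ hnd).1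
    refine ⟨hcu, hcv, hiu, hφv, ?_⟩
    have h1' : uS ℓ ∩ I = uS ℓ := Finset.inter_eq_left.mpr (fun x hx =>
      Finset.mem_erase.mpr ⟨fun he => hiu (he ▸ hx),
        Finset.mem_range.mpr (hTsub _ hcu x hx)⟩)
    have h2' : vS ℓ ∩ I.image G.φ = (vS ℓ).erase (G.φ i) := by
      rw [hIimg]
      ext x
      simp only [Finset.mem_inter, Finset.mem_erase, Finset.mem_range]
      constructor
      · rintro ⟨hv, hne, _⟩; exact ⟨hne, hv⟩
      · rintro ⟨hne, hv⟩; exact ⟨hv, hne, hSsub _ hcv x hv⟩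
    rw [h1', h2'] at himg
    exact himg
  -- facts about the pairs in L(I)_T
  have hTfacts : ∀ j, k + 1 ≤ j → j ≤ k + m →
      G.T.Clade (uT j) ∧ G.S.Clade (vT j) ∧ i ∈ uT j ∧ G.φ i ∉ vT j ∧
        ((uT j).erase i).image G.φ = vT j ∧ ∃ x ∈ uT j, x ≠ i := by
    intro j h1 h2
    obtain ⟨⟨hsT, hsS, himg⟩, hiu, hφv⟩ := hLT j h1 h2
    obtain ⟨c₁, c₂, hnc, hc₁, _⟩ := hsT
    obtain ⟨d₁, d₂, hnd, _, _⟩ := hsS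
    obtain ⟨_, _, _, hcup⟩ := BTree.nodeClades_spec _ hnc
    have hcu : G.T.Clade (uT j) := (BTree.nodeClades_spec _ hnc).1
    have hcv : G.S.Clade (vT j) := (BTree.nodeClades_spec _ hnd).1
    have hex : ∃ x ∈ uT j, x ≠ i := by
      obtain ⟨x, hx⟩ := hc₁
      rw [Finset.mem_inter] at hx
      exact ⟨x, by rw [hcup]; exact Finset.mem_union_left _ hx.1,
        (Finset.mem_erase.mp hx.2).1⟩
    refine ⟨hcu, hcv, hiu, hφv, ?_, hex⟩
    have h1' : uT j ∩ I = (uT j).erase i := by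
      ext x
      simp only [Finset.mem_inter, Finset.mem_erase, hI, Finset.mem_range]
      constructor
      · rintro ⟨hu, hne, _⟩; exact ⟨hne, hu⟩
      · rintro ⟨hne, hu⟩; exact ⟨hu, hne, hTsub _ hcu x hu⟩
    have h2' : vT j ∩ I.image G.φ = vT j := by
      rw [hIimg]
      exact Finset.inter_eq_left.mpr (fun x hx => Finset.mem_erase.mpr
        ⟨fun he => hφv (he ▸ hx), Finset.mem_range.mpr (hSsub _ hcv x hx)⟩)
    rw [h1', h2'] at himg
    exact himg
  -- parent clade facts in T
  obtain ⟨c, hc⟩ := hu₀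
  have hcu₀ : G.T.Clade cu₀ ∧ i ∈ cu₀ ∧ cu₀ = {i} ∪ c ∧ G.T.Clade c ∧ i ∉ c ∧
      c.Nonempty := by
    have hdisj : i ∉ c := by
      rcases hc with h | h
      · have := BTree.nodeClades_disjoint _ G.hT.1 h
        exact fun hic => (Finset.disjoint_left.mp this (Finset.mem_singleton_self i)) hic
      · have := BTree.nodeClades_disjoint _ G.hT.1 h
        exact fun hic => (Finset.disjoint_left.mp this hic) (Finset.mem_singleton_self i)
    rcases hc with h | h
    · obtain ⟨h1, _, h3, h4⟩ := BTree.nodeClades_spec _ h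
      exact ⟨h1, h4 ▸ Finset.mem_union_left _ (Finset.mem_singleton_self i),
        h4, h3, hdisj, BTree.clade_nonempty _ h3⟩
    · obtain ⟨h1, h3, _, h4⟩ := BTree.nodeClades_spec _ h
      exact ⟨h1, h4 ▸ Finset.mem_union_right _ (Finset.mem_singleton_self i),
        by rw [h4, Finset.union_comm], h3, hdisj, BTree.clade_nonempty _ h3⟩
  obtain ⟨hcladecu₀, hicu₀, hcu₀eq, hcladec, hinotc, hcne⟩ := hcu₀
  -- parent clade fact in S : φ i ∈ cv₀ and cv₀ is a clade
  have hcv₀ : G.S.Clade cv₀ ∧ G.φ i ∈ cv₀ := by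
    obtain ⟨d, hd⟩ := hv₀
    rcases hd with h | h
    · obtain ⟨h1, _, _, h4⟩ := BTree.nodeClades_spec _ h
      exact ⟨h1, h4 ▸ Finset.mem_union_left _ (Finset.mem_singleton_self _)⟩
    · obtain ⟨h1, _, _, h4⟩ := BTree.nodeClades_spec _ h
      exact ⟨h1, h4 ▸ Finset.mem_union_right _ (Finset.mem_singleton_self _)⟩
  obtain ⟨hcladecv₀, hφicv₀⟩ := hcv₀
  -- minimality of the parent clade cu₀ among clades containing i
  have hminT : ∀ d, G.T.Clade d → i ∈ d → d = {i} ∨ cu₀ ⊆ d := by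
    intro d hd hid
    rcases BTree.laminar _ G.hT.1 hd hcladecu₀
        ⟨i, Finset.mem_inter.mpr ⟨hid, hicu₀⟩⟩ with hdp | hpd
    · by_cases hdc : (d ∩ c).Nonempty
      · rcases BTree.laminar _ G.hT.1 hd hcladec hdc with h | h
        · exact absurd (h hid) hinotc
        · refine Or.inr ?_
          rw [hcu₀eq]
          exact Finset.union_subset (Finset.singleton_subset_iff.mpr hid) h
      · refine Or.inl (Finset.Subset.antisymm ?_ (Finset.singleton_subset_iff.mpr hid))
        intro x hx
        have := hdp hx
        rw [hcu₀eq, Finset.mem_union] at this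
        rcases this with h | h
        · exact h
        · exact absurd ⟨x, Finset.mem_inter.mpr ⟨hx, h⟩⟩ hdc
    · exact Or.inr hpd
  -- monotonicity of uS up to k
  have huSmono : ∀ ℓ, 1 ≤ ℓ → ℓ ≤ k → uS ℓ ⊆ uS k := by
    intro ℓ h1 h2
    rcases eq_or_lt_of_le h2 with h | h
    · exact h ▸ subset_rfl
    · have hk1 : 1 ≤ k := le_trans h1 h2
      have hsub : vS ℓ ⊆ vS k := (hLSord ℓ k h1 h le_rfl).subset
      have hℓ := hSfacts ℓ h1 h2
      have hk := hSfacts k hk1 le_rfl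
      rw [← Finset.image_subset_image_iff hφinj, hℓ.2.2.2.2, hk.2.2.2.2]
      exact Finset.erase_subset_erase _ hsub
  -- the final contradiction used in parts 1 and 3
  have hfinal : 1 ≤ k → ∀ x, x ∈ uS k → x ∈ cu₀ → False := by
    intro hk x hx1 hx2
    obtain ⟨hcl, _, hni, _, _⟩ := hSfacts k hk le_rfl
    rcases BTree.laminar _ G.hT.1 hcl hcladecu₀
        ⟨x, Finset.mem_inter.mpr ⟨hx1, hx2⟩⟩ with h | h
    · exact hS hk (Finset.ssubset_iff_subset_ne.mpr
        ⟨h, fun he => hni (he ▸ hicu₀)⟩)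
    · exact hni (h hicu₀)
  -- membership transfer: φ a ∈ vS ℓ with a ≠ i gives a ∈ uS ℓ
  have htransfer : ∀ ℓ, 1 ≤ ℓ → ℓ ≤ k → ∀ a, a ≠ i → G.φ a ∈ vS ℓ → a ∈ uS ℓ := by
    intro ℓ h1 h2 a hane hmem
    obtain ⟨_, _, _, _, himg⟩ := hSfacts ℓ h1 h2
    have : G.φ a ∈ (uS ℓ).image G.φ := by
      rw [himg]
      exact Finset.mem_erase.mpr ⟨fun h => hane (hφinj h), hmem⟩
    obtain ⟨x, hx, hxeq⟩ := Finset.mem_image.mp this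
    exact (hφinj hxeq) ▸ hx
  -- membership transfer: a ∈ uT j with a ≠ i gives φ a ∈ vT j
  have htransferT : ∀ j, k + 1 ≤ j → j ≤ k + m → ∀ a, a ≠ i → a ∈ uT j →
      G.φ a ∈ vT j := by
    intro j h1 h2 a hane hmem
    obtain ⟨_, _, _, _, himg, _⟩ := hTfacts j h1 h2
    rw [← himg]
    exact Finset.mem_image_of_mem _ (Finset.mem_erase.mpr ⟨hane, hmem⟩)
  refine ⟨?_, ?_, ?_⟩
  · -- part 1 : E(u_j) ∩ E(v_ℓ) = ∅
    intro j ℓ hj1 hj2 hl1 hl2 a _ hmem hcon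
    obtain ⟨haj, _⟩ := Finset.mem_sdiff.mp hmem
    obtain ⟨hφav, hφanv⟩ := Finset.mem_sdiff.mp hcon
    obtain ⟨hclT, hclS, hiuT, hφinvT, himgT, hex⟩ := hTfacts j hj1 hj2
    have hane : a ≠ i := by
      rintro rfl
      rcases Nat.lt_or_ge ℓ 2 with h | h
      · have : ℓ = 1 := by omega
        rw [this] at hφanv
        exact hφanv (hvS0 ▸ hφicv₀)
      · exact hφanv ((hSfacts (ℓ - 1) (by omega) (by omega)).2.2.2.1)
    have hauS : a ∈ uS ℓ := htransfer ℓ hl1 hl2 a hane hφav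
    have hφavT : G.φ a ∈ vT j := htransferT j hj1 hj2 a hane haj
    obtain ⟨_, hclvS, _, hφivS, himgS⟩ := hSfacts ℓ hl1 hl2
    -- vT j ⊆ vS ℓ
    have hvTsub : vT j ⊆ vS ℓ := by
      rcases BTree.laminar _ G.hS.1 hclS hclvS
          ⟨G.φ a, Finset.mem_inter.mpr ⟨hφavT, hφav⟩⟩ with h | h
      · exact h
      · exact absurd (h hφivS) hφinvT
    -- uT j erase i ⊆ uS ℓ
    have herasesub : (uT j).erase i ⊆ uS ℓ := by
      rw [← Finset.image_subset_image_iff hφinj, himgT, himgS]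
      intro x hx
      exact Finset.mem_erase.mpr ⟨fun he => hφinvT (he ▸ hx), hvTsub hx⟩
    -- cu₀ ⊆ uT j
    have hcu₀sub : cu₀ ⊆ uT j := by
      rcases hminT (uT j) hclT hiuT with h | h
      · rw [h, Finset.mem_singleton] at haj
        exact absurd haj hane
      · exact h
    obtain ⟨x, hxc⟩ := hcne
    have hxne : x ≠ i := fun he => hinotc (he ▸ hxc)
    have hxcu₀ : x ∈ cu₀ := hcu₀eq ▸ Finset.mem_union_right _ hxc
    have hxuS : x ∈ uS k :=
      huSmono ℓ hl1 hl2 (herasesub (Finset.mem_erase.mpr ⟨hxne, hcu₀sub hxcu₀⟩))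
    exact hfinal (le_trans hl1 hl2) x hxuS hxcu₀
  · -- part 2 : E(u_j) ∩ E(v₀) = ∅
    intro j hj1 hj2 a _ hmem hcon
    obtain ⟨haj, _⟩ := Finset.mem_sdiff.mp hmem
    obtain ⟨hφacv, hφane'⟩ := Finset.mem_sdiff.mp hcon
    have hφane : G.φ a ≠ G.φ i := by
      simpa using hφane'
    have hane : a ≠ i := fun h => hφane (by rw [h])
    have hm1 : 1 ≤ m := by omega
    have hφavT : G.φ a ∈ vT j := htransferT j hj1 hj2 a hane haj
    obtain ⟨_, hclSj, _, _, himgj, _⟩ := hTfacts j hj1 hj2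
    obtain ⟨_, hclSkm, _, hφinvTkm, himgkm, _⟩ := hTfacts (k + m) (by omega) le_rfl
    have hvTj : vT j ⊆ vT (k + m) := by
      rcases eq_or_lt_of_le hj2 with h | h
      · exact h ▸ subset_rfl
      · have := (hLTord j (k + m) hj1 h le_rfl).subset
        rw [← himgj, ← himgkm]
        exact Finset.image_subset_image (Finset.erase_subset_erase _ this)
    have hφavTkm : G.φ a ∈ vT (k + m) := hvTj hφavT
    rcases BTree.laminar _ G.hS.1 hclSkm hcladecv₀
        ⟨G.φ a, Finset.mem_inter.mpr ⟨hφavTkm, hφacv⟩⟩ with h | h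
    · exact hT hm1 (Finset.ssubset_iff_subset_ne.mpr
        ⟨h, fun he => hφinvTkm (he ▸ hφicv₀)⟩)
    · exact hφinvTkm (h hφicv₀)
  · -- part 3 : E(u₀) ∩ E(v_ℓ) = ∅
    intro ℓ hl1 hl2 a _ hmem hcon
    obtain ⟨hacu₀, hane'⟩ := Finset.mem_sdiff.mp hmem
    have hane : a ≠ i := by simpa using hane'
    obtain ⟨hφav, _⟩ := Finset.mem_sdiff.mp hcon
    have hauS : a ∈ uS ℓ := htransfer ℓ hl1 hl2 a hane hφav
    exact hfinal (le_trans hl1 hl2) a (huSmono ℓ hl1 hl2 hauS) hacu₀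
end

section
/- Let (X,Y) be a layout of (T,S,φ) that restricts to a planar layout of (T_I, S_{φ(I)}, φ|_I), and let (X',Y') be the image of (X,Y) under any finite sequence of paired flips at elements of L(I) and subtree switches at elements of M(I). Then (X',Y') also restricts to a planar layout of (T_I, S_{φ(I)}, φ|_I). -/
/-! ## Multiple edge insertion

`M(I)` is the set of internal vertices of `T` or `S` that are not vertices of the
induced subtrees `T_I`, `S_{φ(I)}`. -/

/-- The internal vertex of `T` with leaf set `c` belongs to `M(I)` (it is not a
vertex of the induced subtree `T_I`). -/
def MemMIT {n : ℕ} (G : Tanglegram n) (I : Finset ℕ) (c : Finset ℕ) : Prop :=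
  G.T.InternalClade c ∧ ¬ SurvivesInternal G.T I c

/-- The internal vertex of `S` with leaf set `c` belongs to `M(I)` (it is not a
vertex of the induced subtree `S_{φ(I)}`). -/
def MemMIS {n : ℕ} (G : Tanglegram n) (I : Finset ℕ) (c : Finset ℕ) : Prop :=
  G.S.InternalClade c ∧ ¬ SurvivesInternal G.S (I.image G.φ) c

/-- A subtree switch at the internal vertex of the tree `t` whose leaf set is `c`. -/
def SwitchAtVertex (t : BTree) (c : Finset ℕ) (X X' : List ℕ) : Prop :=
  ∃ c₁ c₂, t.NodeClades c c₁ c₂ ∧ SwitchAt c₁ c₂ X X'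

/-- One of the operations of Statement 16: a paired flip at an element of `L(I)` or a
subtree switch at an element of `M(I)`. -/
def MEIStep {n : ℕ} (G : Tanglegram n) (I : Finset ℕ) (p q : List ℕ × List ℕ) : Prop :=
  (∃ cu cv, MemLI G I cu cv ∧ FlipBlock cu p.1 q.1 ∧ FlipBlock cv p.2 q.2) ∨
  (∃ c, MemMIT G I c ∧ SwitchAtVertex G.T c p.1 q.1 ∧ p.2 = q.2) ∨
  (∃ c, MemMIS G I c ∧ SwitchAtVertex G.S c p.2 q.2 ∧ p.1 = q.1)


/-! ## Auxiliary list lemmas -/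

lemma aux_mem_of_block {X u v w : List ℕ} (h : X = u ++ v ++ w) {i : ℕ}
    (h1 : u.length ≤ i) (h2 : i < u.length + v.length) (hi : i < X.length) : X[i] ∈ v := by
  subst h
  have hv : i - u.length < v.length := by omega
  have e1 : (u ++ v ++ w)[i] = (u ++ v)[i]'(by simp; omega) :=
    List.getElem_append_left (by simp; omega)
  have e2 : (u ++ v)[i]'(by simp; omega) = v[i - u.length]'hv :=
    List.getElem_append_right h1
  rw [e1, e2]
  exact List.getElem_mem _

lemma aux_nodup3 {l m r : List ℕ} (h : (l ++ m ++ r).Nodup) :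
    l.Nodup ∧ m.Nodup ∧ r.Nodup ∧ (∀ a ∈ l, a ∉ m) ∧ (∀ a ∈ l, a ∉ r) ∧ (∀ a ∈ m, a ∉ r) := by
  simp only [List.nodup_append, List.disjoint_left] at h
  obtain ⟨⟨h1, h2, h3⟩, h4, h5⟩ := h
  exact ⟨h1, h2, h4, fun a ha hm => h3 a ha a hm rfl,
    fun a ha hr => h5 a (by simp [ha]) a hr rfl,
    fun a ha hr => h5 a (by simp [ha]) a hr rfl⟩

lemma aux_block_align {X l m r l₁ m₁ r₁ : List ℕ} (hnd : X.Nodup)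
    (h1 : X = l ++ m ++ r) (h2 : X = l₁ ++ m₁ ++ r₁)
    (hsub : ∀ x ∈ m₁, x ∈ m) (hne : m₁ ≠ []) :
    ∃ p q, m = p ++ m₁ ++ q ∧ l₁ = l ++ p ∧ r₁ = q ++ r := by
  have hm₁pos : 0 < m₁.length := List.length_pos_iff.2 hne
  have hlen : X.length = l.length + m.length + r.length := by simp [h1]; omega
  have hlen1 : X.length = l₁.length + m₁.length + r₁.length := by simp [h2]; omega
  obtain ⟨_, _, _, hlm, hlr, hmr⟩ := aux_nodup3 (h1 ▸ hnd)
  have hL : l.length ≤ l₁.length := by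
    by_contra hc
    push_neg at hc
    have hi : l₁.length < X.length := by omega
    have h3 := aux_mem_of_block h2 (le_refl _) (by omega) hi
    have h4 := aux_mem_of_block (show X = [] ++ l ++ (m ++ r) by simpa using h1)
      (by simp) (by simpa using hc) hi
    exact hlm _ h4 (hsub _ h3)
  have hR : l₁.length + m₁.length ≤ l.length + m.length := by
    by_contra hc
    push_neg at hc
    have hi : l₁.length + m₁.length - 1 < X.length := by omega
    have h3 := aux_mem_of_block h2 (by omega) (by omega) hi
    have h4 := aux_mem_of_block (show X = (l ++ m) ++ r ++ [] by simp [h1])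
      (by simp; omega) (by simp; omega) hi
    exact hmr _ (hsub _ h3) h4
  set k := l₁.length - l.length with hk
  have hkm : k + m₁.length ≤ m.length := by omega
  have hp : l₁ = l ++ m.take k := by
    have e1 : X.take l₁.length = l₁ := by
      rw [h2, List.append_assoc, List.take_left]
    have e2 : X.take l₁.length = l ++ m.take k := by
      rw [h1, List.append_assoc, List.take_append,
        List.take_of_length_le (by omega), List.take_append,
        show l₁.length - l.length = k from rfl,
        Nat.sub_eq_zero_of_le (by omega), List.take_zero, List.append_nil]
    rw [← e1, e2]
  have hm : m₁ = (m.drop k).take m₁.length := by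
    have e1 : (X.drop l₁.length).take m₁.length = m₁ := by
      rw [h2, List.append_assoc, List.drop_left, List.take_left]
    have e2 : X.drop l₁.length = m.drop k ++ r := by
      rw [h1, List.append_assoc, List.drop_append,
        List.drop_eq_nil_of_le (by omega), List.nil_append,
        List.drop_append,
        show l₁.length - l.length = k from rfl,
        Nat.sub_eq_zero_of_le (by omega), List.drop_zero]
    have e3 : (m.drop k ++ r).take m₁.length = (m.drop k).take m₁.length := by
      rw [List.take_append,
        Nat.sub_eq_zero_of_le (by simp; omega), List.take_zero, List.append_nil]
    rw [← e3, ← e2, e1]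
  have hmdecomp : m = m.take k ++ m₁ ++ m.drop (k + m₁.length) := by
    conv_lhs => rw [← List.take_append_drop k m,
      ← List.take_append_drop m₁.length (m.drop k)]
    rw [List.drop_drop, ← hm, List.append_assoc]
  refine ⟨m.take k, m.drop (k + m₁.length), hmdecomp, hp, ?_⟩
  have hX2 : l₁ ++ m₁ ++ r₁ = l₁ ++ m₁ ++ (m.drop (k + m₁.length) ++ r) := by
    rw [← h2, h1]
    conv_lhs => rw [hmdecomp]
    rw [hp]
    simp [List.append_assoc]
  exact List.append_cancel_left hX2

lemma aux_consec_of_empty {A : List ℕ} {t : Finset ℕ} (h : ∀ a, a ∉ t) : ConsecIn A t :=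
  ⟨A, [], [], by simp, fun a => by simp [h a]⟩

lemma aux_flip_consec {A l m r : List ℕ} {s t : Finset ℕ} (hnd : A.Nodup)
    (hA : A = l ++ m ++ r) (hms : ∀ a, a ∈ m ↔ a ∈ s)
    (hrel : t ⊆ s ∨ s ⊆ t ∨ Disjoint t s)
    (hct : ConsecIn A t) : ConsecIn (l ++ m.reverse ++ r) t := by
  obtain ⟨l₁, m₁, r₁, h2, hm₁⟩ := hct
  by_cases hm₁e : m₁ = []
  · refine aux_consec_of_empty (fun a ha => ?_)
    have := (hm₁ a).2 ha
    simp [hm₁e] at this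
  by_cases hme : m = []
  · rw [show l ++ m.reverse ++ r = A by simp [hA, hme]]
    exact ⟨l₁, m₁, r₁, h2, hm₁⟩
  rcases hrel with hts | hst | hdis
  · obtain ⟨p, q, hmd, hl₁, hr₁⟩ := aux_block_align hnd hA h2
      (fun x hx => (hms x).2 (hts ((hm₁ x).1 hx))) hm₁e
    refine ⟨l ++ q.reverse, m₁.reverse, p.reverse ++ r, ?_, fun a => by simpa using hm₁ a⟩
    rw [hmd]
    simp [List.append_assoc]
  · obtain ⟨p, q, hmd, hl, hr⟩ := aux_block_align hnd h2 hA
      (fun x hx => (hm₁ x).2 (hst ((hms x).1 hx))) hme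
    refine ⟨l₁, p ++ m.reverse ++ q, r₁, ?_, fun a => ?_⟩
    · rw [hl, hr]
      simp [List.append_assoc]
    · rw [← hm₁ a, hmd]
      simp
  · have hlen : A.length = l.length + m.length + r.length := by simp [hA]; omega
    have hlen1 : A.length = l₁.length + m₁.length + r₁.length := by simp [h2]; omega
    have hm₁pos : 0 < m₁.length := List.length_pos_iff.2 hm₁e
    have hmpos : 0 < m.length := List.length_pos_iff.2 hme
    have htri : l₁.length + m₁.length ≤ l.length ∨ l.length + m.length ≤ l₁.length := by
      by_contra hc
      push_neg at hc
      obtain ⟨hc1, hc2⟩ := hc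
      have hi : max l.length l₁.length < A.length := by omega
      have h3 := aux_mem_of_block hA (le_max_left _ _) (by omega) hi
      have h4 := aux_mem_of_block h2 (le_max_right _ _) (by omega) hi
      exact (Finset.disjoint_right.1 hdis ((hms _).1 h3)) ((hm₁ _).1 h4)
    rcases htri with hle | hge
    · have t1 : A.take l₁.length = l₁ := by rw [h2, List.append_assoc, List.take_left]
      have t2 : A.take l₁.length = l.take l₁.length := by
        rw [hA, List.append_assoc, List.take_append,
          Nat.sub_eq_zero_of_le (by omega), List.take_zero, List.append_nil]
      have t3 : (A.drop l₁.length).take m₁.length = m₁ := by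
        rw [h2, List.append_assoc, List.drop_left, List.take_left]
      have t4 : A.drop l₁.length = l.drop l₁.length ++ (m ++ r) := by
        rw [hA, List.append_assoc, List.drop_append,
          Nat.sub_eq_zero_of_le (by omega), List.drop_zero]
      have t5 : (l.drop l₁.length ++ (m ++ r)).take m₁.length
          = (l.drop l₁.length).take m₁.length := by
        rw [List.take_append,
          Nat.sub_eq_zero_of_le (by simp; omega), List.take_zero, List.append_nil]
      have hl : l = l₁ ++ m₁ ++ l.drop (l₁.length + m₁.length) := by
        conv_lhs => rw [← List.take_append_drop l₁.length l,
          ← List.take_append_drop m₁.length (l.drop l₁.length)]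
        rw [List.drop_drop, ← t2, t1, ← t5, ← t4, t3, List.append_assoc]
      refine ⟨l₁, m₁, l.drop (l₁.length + m₁.length) ++ m.reverse ++ r, ?_, hm₁⟩
      conv_lhs => rw [hl]
      simp [List.append_assoc]
    · set k := l₁.length - (l.length + m.length) with hk
      have t1 : A.drop (l.length + m.length) = r := by
        rw [hA, show l.length + m.length = (l ++ m).length by simp, List.drop_left]
      have t2 : r.drop k = m₁ ++ r₁ := by
        have e : A.drop l₁.length = m₁ ++ r₁ := by
          rw [h2, List.append_assoc, List.drop_left]
        rw [← e, ← t1, List.drop_drop]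
        congr 1
        omega
      have t3 : m₁ = (r.drop k).take m₁.length := by
        rw [t2, List.take_left]
      have hr : r = r.take k ++ m₁ ++ r.drop (k + m₁.length) := by
        conv_lhs => rw [← List.take_append_drop k r,
          ← List.take_append_drop m₁.length (r.drop k)]
        rw [List.drop_drop, ← t3, List.append_assoc]
      refine ⟨l ++ m.reverse ++ r.take k, m₁, r.drop (k + m₁.length), ?_, hm₁⟩
      conv_lhs => rw [hr]
      simp [List.append_assoc]

/-! ## idxOf lemmas -/

lemma aux_idxOf_reverse_eq {m : List ℕ} (hnd : m.Nodup) {x : ℕ} (hx : x ∈ m) :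
    List.idxOf x m.reverse = m.length - 1 - List.idxOf x m := by
  have h1 : List.idxOf x m < m.length := List.idxOf_lt_length_iff.2 hx
  have h2 : m.length - 1 - List.idxOf x m < m.reverse.length := by simp; omega
  have h3 : m.reverse[m.length - 1 - List.idxOf x m]'h2 = x := by
    rw [List.getElem_reverse]
    have := List.getElem_idxOf (xs := m) h1
    convert this using 2
    omega
  calc List.idxOf x m.reverse
      = List.idxOf (m.reverse[m.length - 1 - List.idxOf x m]'h2) m.reverse := by rw [h3]
    _ = m.length - 1 - List.idxOf x m :=
        List.Nodup.idxOf_getElem (List.nodup_reverse.2 hnd) _ h2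

lemma aux_idxOf_reverse_lt {m : List ℕ} (hnd : m.Nodup) {a b : ℕ} (ha : a ∈ m) (hb : b ∈ m) :
    (List.idxOf a m.reverse < List.idxOf b m.reverse ↔
      List.idxOf b m < List.idxOf a m) := by
  rw [aux_idxOf_reverse_eq hnd ha, aux_idxOf_reverse_eq hnd hb]
  have h1 : List.idxOf a m < m.length := List.idxOf_lt_length_iff.2 ha
  have h2 : List.idxOf b m < m.length := List.idxOf_lt_length_iff.2 hb
  constructor <;> intro <;> omega

lemma aux_flip_idx_facts {l m r : List ℕ} (hnd : (l ++ m ++ r).Nodup) {x : ℕ}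
    (hx : x ∈ l ++ m ++ r) :
    (x ∈ m ∧ l.length ≤ List.idxOf x (l ++ m ++ r) ∧
      List.idxOf x (l ++ m ++ r) < l.length + m.length ∧
      l.length ≤ List.idxOf x (l ++ m.reverse ++ r) ∧
      List.idxOf x (l ++ m.reverse ++ r) < l.length + m.length) ∨
    (x ∉ m ∧ List.idxOf x (l ++ m ++ r) = List.idxOf x (l ++ m.reverse ++ r) ∧
      (List.idxOf x (l ++ m ++ r) < l.length ∨
        l.length + m.length ≤ List.idxOf x (l ++ m ++ r))) := by
  obtain ⟨-, -, -, hlm, hlr, hmr⟩ := aux_nodup3 hnd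
  rcases List.mem_append.1 hx with hx' | hxr
  · rcases List.mem_append.1 hx' with hxl | hxm
    · have e1 : List.idxOf x (l ++ m ++ r) = List.idxOf x l := by
        rw [List.idxOf_append_of_mem (show x ∈ l ++ m by simp [hxl]),
          List.idxOf_append_of_mem hxl]
      have e2 : List.idxOf x (l ++ m.reverse ++ r) = List.idxOf x l := by
        rw [List.idxOf_append_of_mem (show x ∈ l ++ m.reverse by simp [hxl]),
          List.idxOf_append_of_mem hxl]
      refine Or.inr ⟨fun h => hlm x hxl h, by rw [e1, e2], ?_⟩
      left
      rw [e1]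
      exact List.idxOf_lt_length_iff.2 hxl
    · have hnl : x ∉ l := fun h => hlm x h hxm
      have e1 : List.idxOf x (l ++ m ++ r) = l.length + List.idxOf x m := by
        rw [List.idxOf_append_of_mem (by simp [hxm]),
          List.idxOf_append_of_notMem hnl]
      have e2 : List.idxOf x (l ++ m.reverse ++ r)
          = l.length + List.idxOf x m.reverse := by
        rw [List.idxOf_append_of_mem (by simp [hxm]),
          List.idxOf_append_of_notMem hnl]
      have b1 : List.idxOf x m < m.length := List.idxOf_lt_length_iff.2 hxm
      have b2 : List.idxOf x m.reverse < m.length := by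
        have := List.idxOf_lt_length_iff.2 (show x ∈ m.reverse by simp [hxm])
        simpa using this
      exact Or.inl ⟨hxm, by omega, by omega, by omega, by omega⟩
  · have hnlm : x ∉ l ++ m := by
      simp only [List.mem_append]
      push_neg
      exact ⟨fun h => hlr x h hxr, fun h => hmr x h hxr⟩
    have hnlm' : x ∉ l ++ m.reverse := by
      simp only [List.mem_append, List.mem_reverse]
      push_neg
      exact ⟨fun h => hlr x h hxr, fun h => hmr x h hxr⟩
    refine Or.inr ⟨fun h => hmr x h hxr, ?_, ?_⟩
    · rw [List.idxOf_append_of_notMem hnlm, List.idxOf_append_of_notMem hnlm']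
      simp
    · right
      rw [List.idxOf_append_of_notMem hnlm]
      simp

lemma aux_flip_idx_both {l m r : List ℕ} (hnd : (l ++ m ++ r).Nodup) {a b : ℕ}
    (ha : a ∈ m) (hb : b ∈ m) :
    (List.idxOf a (l ++ m.reverse ++ r) < List.idxOf b (l ++ m.reverse ++ r) ↔
      List.idxOf b (l ++ m ++ r) < List.idxOf a (l ++ m ++ r)) := by
  obtain ⟨-, hm, -, hlm, -, -⟩ := aux_nodup3 hnd
  have hna : a ∉ l := fun h => hlm a h ha
  have hnb : b ∉ l := fun h => hlm b h hb
  rw [List.idxOf_append_of_mem (show a ∈ l ++ m.reverse by simp [ha]),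
    List.idxOf_append_of_mem (show b ∈ l ++ m.reverse by simp [hb]),
    List.idxOf_append_of_mem (show a ∈ l ++ m by simp [ha]),
    List.idxOf_append_of_mem (show b ∈ l ++ m by simp [hb]),
    List.idxOf_append_of_notMem hna, List.idxOf_append_of_notMem hnb,
    List.idxOf_append_of_notMem hna, List.idxOf_append_of_notMem hnb,
    Nat.add_lt_add_iff_left, Nat.add_lt_add_iff_left]
  exact aux_idxOf_reverse_lt hm ha hb

lemma aux_flip_idx_other {l m r : List ℕ} (hnd : (l ++ m ++ r).Nodup) {a b : ℕ}
    (ha : a ∈ l ++ m ++ r) (hb : b ∈ l ++ m ++ r) (hno : ¬(a ∈ m ∧ b ∈ m)) :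
    (List.idxOf a (l ++ m.reverse ++ r) < List.idxOf b (l ++ m.reverse ++ r) ↔
      List.idxOf a (l ++ m ++ r) < List.idxOf b (l ++ m ++ r)) := by
  rcases aux_flip_idx_facts hnd ha with ⟨ham, ha1, ha2, ha3, ha4⟩ | ⟨ham, ha1, ha2⟩ <;>
    rcases aux_flip_idx_facts hnd hb with ⟨hbm, hb1, hb2, hb3, hb4⟩ | ⟨hbm, hb1, hb2⟩
  · exact absurd ⟨ham, hbm⟩ hno
  all_goals constructor <;> intro <;> omega

/-! ## Clade lemmas -/

lemma aux_clade_subset_leaves : ∀ {t : BTree} {c : Finset ℕ}, t.Clade c → c ⊆ t.leaves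
  | .leaf i, c, h => by
      simp only [BTree.Clade] at h
      simp [h, BTree.leaves, BTree.leafList]
  | .node l r, c, h => by
      have hsub : l.leaves ⊆ (BTree.node l r).leaves ∧ r.leaves ⊆ (BTree.node l r).leaves := by
        constructor <;> intro a ha <;>
          simp only [BTree.leaves, BTree.leafList, List.toFinset_append, Finset.mem_union,
            List.mem_toFinset] at * <;> tauto
      rcases h with h | h | h
      · rw [h]
      · exact (aux_clade_subset_leaves h).trans hsub.1
      · exact (aux_clade_subset_leaves h).trans hsub.2

lemma aux_nodeClades_clade : ∀ {t : BTree} {c c₁ c₂ : Finset ℕ},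
    t.NodeClades c c₁ c₂ → t.Clade c
  | .leaf _, _, _, _, h => h.elim
  | .node l r, c, c₁, c₂, h => by
      rcases h with ⟨h, -, -⟩ | h | h
      · exact Or.inl h
      · exact Or.inr (Or.inl (aux_nodeClades_clade h))
      · exact Or.inr (Or.inr (aux_nodeClades_clade h))

lemma aux_survives_clade {t : BTree} {I c : Finset ℕ} (h : SurvivesInternal t I c) :
    t.Clade c := by
  obtain ⟨c₁, c₂, hn, -, -⟩ := h
  exact aux_nodeClades_clade hn

lemma aux_clade_laminar : ∀ {t : BTree}, t.leafList.Nodup → ∀ {c c' : Finset ℕ},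
    t.Clade c → t.Clade c' → c ⊆ c' ∨ c' ⊆ c ∨ Disjoint c c'
  | .leaf i, _, c, c', h, h' => by
      simp only [BTree.Clade] at h h'
      subst h h'
      exact Or.inl (subset_refl _)
  | .node l r, hnd, c, c', h, h' => by
      have hnd' : l.leafList.Nodup ∧ r.leafList.Nodup ∧
          ∀ a ∈ l.leafList, a ∉ r.leafList := by
        simp only [BTree.leafList, List.nodup_append, List.disjoint_left] at hnd
        exact ⟨hnd.1, hnd.2.1, fun a ha hb => hnd.2.2 a ha a hb rfl⟩
      have hdisj : Disjoint l.leaves r.leaves := by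
        rw [Finset.disjoint_left]
        intro a ha hb
        simp only [BTree.leaves, List.mem_toFinset] at ha hb
        exact hnd'.2.2 a ha hb
      rcases h with rfl | hcl | hcr
      · exact Or.inr (Or.inl (aux_clade_subset_leaves h'))
      · rcases h' with rfl | hcl' | hcr'
        · exact Or.inl (aux_clade_subset_leaves (Or.inr (Or.inl hcl)))
        · exact aux_clade_laminar hnd'.1 hcl hcl'
        · exact Or.inr (Or.inr (hdisj.mono (aux_clade_subset_leaves hcl)
            (aux_clade_subset_leaves hcr')))
      · rcases h' with rfl | hcl' | hcr'
        · exact Or.inl (aux_clade_subset_leaves (Or.inr (Or.inr hcr)))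
        · exact Or.inr (Or.inr (hdisj.symm.mono (aux_clade_subset_leaves hcr)
            (aux_clade_subset_leaves hcl')))
        · exact aux_clade_laminar hnd'.2.1 hcr hcr'

/-! ## Filtering flips and switches -/

lemma aux_flipBlock_filter {s J : Finset ℕ} {X X' : List ℕ} (h : FlipBlock s X X') :
    FlipBlock (s ∩ J) (X.filter fun a => decide (a ∈ J))
      (X'.filter fun a => decide (a ∈ J)) := by
  obtain ⟨l, m, r, h1, h2, h3⟩ := h
  refine ⟨l.filter (fun a => decide (a ∈ J)), m.filter (fun a => decide (a ∈ J)),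
    r.filter (fun a => decide (a ∈ J)), by rw [h1]; simp [List.filter_append],
    fun a => ?_, by rw [h3]; simp [List.filter_append, List.filter_reverse]⟩
  simp [List.mem_filter, h2 a, Finset.mem_inter]

lemma aux_switch_filter_eq {c₁ c₂ J : Finset ℕ} {X X' : List ℕ}
    (h : SwitchBlock c₁ c₂ X X') (hc : c₁ ∩ J = ∅ ∨ c₂ ∩ J = ∅) :
    X'.filter (fun a => decide (a ∈ J)) = X.filter (fun a => decide (a ∈ J)) := by
  obtain ⟨l, m₁, m₂, r, h1, hm₁, hm₂, h2⟩ := h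
  have key : ∀ (m : List ℕ) (c : Finset ℕ), (∀ a, a ∈ m ↔ a ∈ c) → c ∩ J = ∅ →
      m.filter (fun a => decide (a ∈ J)) = [] := by
    intro m c hm hcJ
    rw [List.filter_eq_nil_iff]
    intro a ha hd
    have : a ∈ c ∩ J := Finset.mem_inter.2 ⟨(hm a).1 ha, by simpa using hd⟩
    simp [hcJ] at this
  rw [h1, h2]
  simp only [List.filter_append]
  rcases hc with hc | hc
  · rw [key m₁ c₁ hm₁ hc]
    simp
  · rw [key m₂ c₂ hm₂ hc]
    simp

/-! ## Paired flips preserve planar sublayouts -/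

lemma aux_flip_preserves {n : ℕ} (G : Tanglegram n) (I : Finset ℕ) {A B A' B' : List ℕ}
    {cu cv : Finset ℕ} (hLI : MemLI G I cu cv)
    (hA : FlipBlock (cu ∩ I) A A') (hB : FlipBlock (cv ∩ I.image G.φ) B B')
    (h : IsPlanarSubLayout G I A B) : IsPlanarSubLayout G I A' B' := by
  obtain ⟨⟨hndA, hmemA, hndB, hmemB, hconsA, hconsB⟩, hcross⟩ := h
  obtain ⟨hSu, hSv, himg⟩ := hLI
  obtain ⟨l, m, r, hA1, hA2, hA3⟩ := hA
  obtain ⟨l', m', r', hB1, hB2, hB3⟩ := hB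
  have hndA0 : (l ++ m ++ r).Nodup := hA1 ▸ hndA
  have hndB0 : (l' ++ m' ++ r').Nodup := hB1 ▸ hndB
  have hpermA : A'.Perm A := by
    rw [hA1, hA3]
    exact (m.reverse_perm.append_left l).append_right r
  have hpermB : B'.Perm B := by
    rw [hB1, hB3]
    exact (m'.reverse_perm.append_left l').append_right r'
  have hcu : G.T.Clade cu := aux_survives_clade hSu
  have hcv : G.S.Clade cv := aux_survives_clade hSv
  have hφm : ∀ x : ℕ, G.φ x ∈ m' ↔ x ∈ cu ∩ I := by
    intro x
    rw [hB2, ← himg]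
    constructor
    · intro h
      obtain ⟨y, hy, he⟩ := Finset.mem_image.1 h
      rwa [← G.φ.injective he]
    · exact fun h => Finset.mem_image_of_mem _ h
  refine ⟨⟨hpermA.symm.nodup hndA, fun a => hpermA.mem_iff.trans (hmemA a),
    hpermB.symm.nodup hndB, fun b => hpermB.mem_iff.trans (hmemB b), ?_, ?_⟩, ?_⟩
  · intro c hc
    have hrel : (c ∩ I) ⊆ (cu ∩ I) ∨ (cu ∩ I) ⊆ (c ∩ I) ∨ Disjoint (c ∩ I) (cu ∩ I) := by
      rcases aux_clade_laminar G.hT.1 hc hcu with h' | h' | h'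
      · exact Or.inl (Finset.inter_subset_inter h' (subset_refl I))
      · exact Or.inr (Or.inl (Finset.inter_subset_inter h' (subset_refl I)))
      · exact Or.inr (Or.inr (h'.mono Finset.inter_subset_left
          Finset.inter_subset_left))
    rw [hA3]
    exact aux_flip_consec hndA hA1 hA2 hrel (hconsA c hc)
  · intro c hc
    have hrel : (c ∩ I.image G.φ) ⊆ (cv ∩ I.image G.φ) ∨
        (cv ∩ I.image G.φ) ⊆ (c ∩ I.image G.φ) ∨
        Disjoint (c ∩ I.image G.φ) (cv ∩ I.image G.φ) := by
      rcases aux_clade_laminar G.hS.1 hc hcv with h' | h' | h'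
      · exact Or.inl (Finset.inter_subset_inter h' (subset_refl _))
      · exact Or.inr (Or.inl (Finset.inter_subset_inter h' (subset_refl _)))
      · exact Or.inr (Or.inr (h'.mono Finset.inter_subset_left
          Finset.inter_subset_left))
    rw [hB3]
    exact aux_flip_consec hndB hB1 hB2 hrel (hconsB c hc)
  · intro i hi j hj hcr
    obtain ⟨hcr1, hcr2⟩ := hcr
    rw [hA3] at hcr1
    rw [hB3] at hcr2
    have hiA : i ∈ l ++ m ++ r := hA1 ▸ ((hmemA i).2 hi)
    have hjA : j ∈ l ++ m ++ r := hA1 ▸ ((hmemA j).2 hj)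
    have hφiB : G.φ i ∈ l' ++ m' ++ r' := hB1 ▸ ((hmemB _).2 (Finset.mem_image_of_mem _ hi))
    have hφjB : G.φ j ∈ l' ++ m' ++ r' := hB1 ▸ ((hmemB _).2 (Finset.mem_image_of_mem _ hj))
    by_cases hbm : i ∈ cu ∩ I ∧ j ∈ cu ∩ I
    · have h1 := (aux_flip_idx_both hndA0 ((hA2 i).2 hbm.1) ((hA2 j).2 hbm.2)).1 hcr1
      have h2 := (aux_flip_idx_both hndB0 ((hφm j).2 hbm.2) ((hφm i).2 hbm.1)).1 hcr2
      rw [← hA1] at h1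
      rw [← hB1] at h2
      exact hcross j hj i hi ⟨h1, h2⟩
    · have hnoA : ¬(i ∈ m ∧ j ∈ m) := fun ⟨x, y⟩ => hbm ⟨(hA2 i).1 x, (hA2 j).1 y⟩
      have hnoB : ¬(G.φ j ∈ m' ∧ G.φ i ∈ m') :=
        fun ⟨x, y⟩ => hbm ⟨(hφm i).1 y, (hφm j).1 x⟩
      have h1 := (aux_flip_idx_other hndA0 hiA hjA hnoA).1 hcr1
      have h2 := (aux_flip_idx_other hndB0 hφjB hφiB hnoB).1 hcr2
      rw [← hA1] at h1
      rw [← hB1] at h2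
      exact hcross i hi j hj ⟨h1, h2⟩

/-- Let `(X, Y)` be a layout of `(T,S,φ)` restricting to a planar
layout of the subtanglegram induced by `I`, and let `(X', Y')` be the image of
`(X, Y)` under any finite sequence of paired flips at elements of `L(I)` and subtree
switches at elements of `M(I)`.  Then `(X', Y')` also restricts to a planar layout of
the induced subtanglegram. -/
theorem flips_switches_preserve_sub_planarity {n : ℕ} (G : Tanglegram n)
    (I : Finset ℕ) (hI : I ⊆ Finset.range n) (hpl : SubPlanar G I)
    (X Y : List ℕ) (hXY : IsLayout G X Y) (hres : RestrictsToPlanarSub G I X Y)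
    (p : List ℕ × List ℕ) (h : Relation.ReflTransGen (MEIStep G I) (X, Y) p) :
    RestrictsToPlanarSub G I p.1 p.2 := by
  induction h with
  | refl => exact hres
  | @tail q q' hsteps hstep ih =>
    rcases hstep with ⟨cu, cv, hLI, hf1, hf2⟩ | ⟨cc, hM, hsw, heq⟩ | ⟨cc, hM, hsw, heq⟩
    · unfold RestrictsToPlanarSub at ih ⊢
      exact aux_flip_preserves G I hLI (aux_flipBlock_filter hf1)
        (aux_flipBlock_filter hf2) ih
    · obtain ⟨c₁, c₂, hnc, hsw'⟩ := hsw
      have hc : c₁ ∩ I = ∅ ∨ c₂ ∩ I = ∅ := by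
        by_contra hcon
        push_neg at hcon
        exact hM.2 ⟨c₁, c₂, hnc, hcon.1,
          hcon.2⟩
      have hfe : q'.1.filter (fun a => decide (a ∈ I))
          = q.1.filter (fun a => decide (a ∈ I)) := by
        rcases hsw' with h' | h'
        · exact aux_switch_filter_eq h' hc
        · exact aux_switch_filter_eq h' hc.symm
      unfold RestrictsToPlanarSub at ih ⊢
      rw [hfe, ← heq]
      exact ih
    · obtain ⟨c₁, c₂, hnc, hsw'⟩ := hsw
      have hc : c₁ ∩ I.image G.φ = ∅ ∨ c₂ ∩ I.image G.φ = ∅ := by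
        by_contra hcon
        push_neg at hcon
        exact hM.2 ⟨c₁, c₂, hnc, hcon.1,
          hcon.2⟩
      have hfe : q'.2.filter (fun b => decide (b ∈ I.image G.φ))
          = q.2.filter (fun b => decide (b ∈ I.image G.φ)) := by
        rcases hsw' with h' | h'
        · exact aux_switch_filter_eq h' hc
        · exact aux_switch_filter_eq h' hc.symm
      unfold RestrictsToPlanarSub at ih ⊢
      rw [hfe, ← heq]
      exact ih
end
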